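/- Let N ≥ 2, ρ_L, ρ_R ∈ (0,1) and ω_L, ω_R > 0 be arbitrary. Then for every n ≥ 1 and every 1 ≤ x_1 < … < x_n ≤ N−1, the n-point non-centered correlations of the explicit measure μ satisfy E_μ[∏_{i=1}^n η(x_i)] = Σ_{j=0}^n ρ_L^{n−j}(ρ_R−ρ_L)^j Σ_{1 ≤ i_1 < … < i_j ≤ n} ∏_{ℓ=1}^j (1/ω_L + x_{i_ℓ} − ℓ)/(1/ω_L + 1/ω_R + N − 1 − ℓ), where E_μ[g] := Σ_{η ∈ {0,1}^{{1,…,N−1}}} μ(η) g(η). -/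

import Mathlib

noncomputable def sepQ (N : ℕ) (ωL ωR : ℝ) (J : Finset ℕ) : ℝ :=
  (((J.sort (· ≤ ·)).zipIdx.map Prod.swap).map
    (fun p => (1 / ωL + (p.2 : ℝ) - ((p.1 : ℝ) + 1)) /
      (1 / ωL + 1 / ωR + (N : ℝ) - 1 - ((p.1 : ℝ) + 1)))).prod

noncomputable def sepF (N : ℕ) (ωL ωR : ℝ) (I : Finset ℕ) : ℝ :=
  ∑ J ∈ (Finset.Icc 1 (N - 1)).powerset.filter (fun J => I ⊆ J),
    (-1 : ℝ) ^ (J \ I).card * sepQ N ωL ωR J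

noncomputable def sepB (N : ℕ) (ρL ρR : ℝ) (I A : Finset ℕ) : ℝ :=
  (∏ x ∈ I, (if x ∈ A then ρR else 1 - ρR)) *
    (∏ x ∈ Finset.Icc 1 (N - 1) \ I, (if x ∈ A then ρL else 1 - ρL))

noncomputable def sepMu (N : ℕ) (ωL ωR ρL ρR : ℝ) (A : Finset ℕ) : ℝ :=
  ∑ I ∈ (Finset.Icc 1 (N - 1)).powerset, sepF N ωL ωR I * sepB N ρL ρR I A

noncomputable def occ (A : Finset ℕ) (x : ℕ) : ℝ := if x ∈ A then 1 else 0

noncomputable def sepGen (N : ℕ) (ωL ωR ρL ρR : ℝ) (f : Finset ℕ → ℝ) (A : Finset ℕ) : ℝ :=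
  (∑ x ∈ Finset.Icc 1 (N - 2),
      (occ A x * (1 - occ A (x + 1)) * (f (insert (x + 1) (A.erase x)) - f A) +
        occ A (x + 1) * (1 - occ A x) * (f (insert x (A.erase (x + 1))) - f A))) +
    ωL * (occ A 1 * (1 - ρL) * (f (A.erase 1) - f A) +
        ρL * (1 - occ A 1) * (f (insert 1 A) - f A)) +
    ωR * (occ A (N - 1) * (1 - ρR) * (f (A.erase (N - 1)) - f A) +
        ρR * (1 - occ A (N - 1)) * (f (insert (N - 1) A) - f A))

/-- Product over the increasingly sorted elements i_1 < … < i_j of s of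
(1/ω_L + x_{i_ℓ} − ℓ) / (1/ω_L + 1/ω_R + N − 1 − ℓ). -/
noncomputable def idxProdW (N n : ℕ) (ωL ωR : ℝ) (x : Fin n → ℕ) (s : Finset (Fin n)) : ℝ :=
  (((s.sort (· ≤ ·)).zipIdx.map Prod.swap).map
    (fun p => (1 / ωL + (x p.2 : ℝ) - ((p.1 : ℝ) + 1)) /
      (1 / ωL + 1 / ωR + (N : ℝ) - 1 - ((p.1 : ℝ) + 1)))).prod

/-!
`μ` is the signed mixture `∑ I, F(I) • B_I` of the product Bernoulli measures `B_I` with density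
`ρ_R` on `I` and `ρ_L` off `I`. Under `B_I` the sites `X = {x_1, …, x_n}` are independent, so
`E_{B_I}[∏_{y ∈ X} η(y)] = ∏_{y ∈ X} (ρ_L + (ρ_R - ρ_L)[y ∈ I])
  = ∑_{K ⊆ X ∩ I} (ρ_R - ρ_L)^{|K|} ρ_L^{n - |K|}`.
Exchanging the sums leaves `∑_{I ⊇ K} F(I)`, which is `Q(K)` because `F` is by definition the
Möbius transform of `Q` on the Boolean lattice. Finally `Q({x_i : i ∈ t})` is the product over
`t` indexed by positions, since `x` is increasing.
-/

open Finset

section BooleanLattice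

variable {α : Type*} [DecidableEq α]

theorem Finset.prod_ite_mem_of_subset {M : Type*} [CommMonoid M] {S A : Finset α} (hA : A ⊆ S)
    (f g : α → M) :
    ∏ y ∈ S, (if y ∈ A then f y else g y) = (∏ y ∈ A, f y) * ∏ y ∈ S \ A, g y := by
  rw [prod_ite, filter_mem_eq_inter, inter_eq_right.mpr hA, filter_notMem_eq_sdiff]

theorem Finset.sum_powerset_prod_ite_mem {R : Type*} [CommSemiring R] (S : Finset α)
    (f g : α → R) :
    ∑ A ∈ S.powerset, ∏ y ∈ S, (if y ∈ A then f y else g y) = ∏ y ∈ S, (f y + g y) := by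
  rw [prod_add]
  exact sum_congr rfl fun A hA => prod_ite_mem_of_subset (mem_powerset.mp hA) f g

theorem Finset.sum_Icc_neg_one_pow_card_sdiff {R : Type*} [CommRing R] (K J : Finset α) :
    ∑ I ∈ Icc K J, (-1 : R) ^ #(J \ I) = if K = J then 1 else 0 := by
  by_cases hKJ : K ⊆ J
  · have hinj : Set.InjOn (K ∪ ·) (J \ K).powerset := fun t ht u hu htu => by
      have hdt := disjoint_of_subset_left (mem_powerset.mp ht) sdiff_disjoint
      have hdu := disjoint_of_subset_left (mem_powerset.mp hu) sdiff_disjoint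
      simpa [union_sdiff_cancel_left hdt.symm, union_sdiff_cancel_left hdu.symm] using
        congrArg (· \ K) htu
    rw [Icc_eq_image_powerset hKJ, sum_image hinj]
    calc ∑ t ∈ (J \ K).powerset, (-1 : R) ^ #(J \ (K ∪ t))
        = ∑ t ∈ (J \ K).powerset, (∏ _ ∈ t, (1 : R)) * ∏ _ ∈ (J \ K) \ t, (-1 : R) := by
          simp only [prod_const_one, one_mul, prod_const, sdiff_sdiff_left, sup_eq_union]
      _ = ∏ _ ∈ J \ K, (1 + -1 : R) := (prod_add _ _ _).symm
      _ = if K = J then 1 else 0 := by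
          rw [add_neg_cancel, prod_const, zero_pow_eq]
          simp only [card_eq_zero, sdiff_eq_empty_iff_subset, subset_antisymm_iff (a := K), hKJ,
            true_and]
  · rw [Icc_eq_empty hKJ, sum_empty, if_neg (fun h => hKJ h.le)]

/-- Möbius inversion on the Boolean lattice of subsets of `S`. -/
theorem Finset.sum_superset_sum_superset_neg_one_pow_mul {R : Type*} [CommRing R]
    {S K : Finset α} (hK : K ⊆ S) (g : Finset α → R) :
    ∑ I ∈ S.powerset with K ⊆ I, ∑ J ∈ S.powerset with I ⊆ J, (-1 : R) ^ #(J \ I) * g J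
      = g K := by
  rw [sum_comm' (t' := S.powerset) (s' := fun J => Icc K J)]
  · simp_rw [← sum_mul, sum_Icc_neg_one_pow_card_sdiff, ite_mul, one_mul, zero_mul]
    rw [sum_ite_eq, if_pos (mem_powerset.mpr hK)]
  · intro I J
    simp only [mem_filter, mem_powerset, mem_Icc]
    exact ⟨fun ⟨⟨_, hKI⟩, hJS, hIJ⟩ => ⟨⟨hKI, hIJ⟩, hJS⟩,
      fun ⟨⟨hKI, hIJ⟩, hJS⟩ => ⟨⟨hIJ.trans hJS, hKI⟩, hJS, hIJ⟩⟩

theorem Finset.sum_powerset_superset_prod_bernoulli {R : Type*} [CommRing R] {S T : Finset α}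
    (hT : T ⊆ S) (p : α → R) :
    ∑ A ∈ S.powerset with T ⊆ A, ∏ y ∈ S, (if y ∈ A then p y else 1 - p y)
      = ∏ y ∈ T, p y := by
  calc _ = ∑ A ∈ S.powerset, ∏ y ∈ S, (if y ∈ A then p y else if y ∈ T then 0 else 1 - p y) := by
        rw [sum_filter]
        refine sum_congr rfl fun A _ => ?_
        split_ifs with hTA
        · refine prod_congr rfl fun y _ => ?_
          by_cases hyA : y ∈ A
          · simp only [hyA, if_true]
          · simp only [hyA, if_false, if_neg fun hyT => hyA (hTA hyT)]
        · obtain ⟨y, hyT, hyA⟩ := not_subset.mp hTA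
          exact (prod_eq_zero (hT hyT) (by simp only [hyA, hyT, if_true, if_false])).symm
    _ = ∏ y ∈ S, (if y ∈ T then p y else 1) := by
        rw [sum_powerset_prod_ite_mem]
        exact prod_congr rfl fun y _ => by split_ifs <;> ring
    _ = ∏ y ∈ T, p y := by rw [prod_ite_mem, inter_eq_right.mpr hT]

theorem Finset.prod_ite_mem_eq_sum_powerset {R : Type*} [CommRing R] {ι : Type*} [DecidableEq ι]
    (s : Finset ι) (f : ι → α) (I : Finset α) (a b : R) :
    ∏ i ∈ s, (if f i ∈ I then a else b)
      = ∑ t ∈ s.powerset with t.image f ⊆ I, (a - b) ^ #t * b ^ (#s - #t) := by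
  calc _ = ∏ i ∈ s, ((if f i ∈ I then a - b else 0) + b) :=
        prod_congr rfl fun i _ => by split_ifs <;> ring
    _ = _ := by
      rw [prod_add, sum_filter]
      refine sum_congr rfl fun t ht => ?_
      rw [prod_ite_zero, prod_const, prod_const, card_sdiff_of_subset (mem_powerset.mp ht)]
      simp only [image_subset_iff, ite_mul, zero_mul]

end BooleanLattice

theorem prod_occ (A T : Finset ℕ) : ∏ y ∈ T, occ A y = if T ⊆ A then 1 else 0 := by
  simp only [occ, prod_ite_zero, prod_const_one]
  rfl

theorem sepB_eq_prod {N : ℕ} {I : Finset ℕ} (hI : I ⊆ Icc 1 (N - 1)) (ρL ρR : ℝ) (A : Finset ℕ) :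
    sepB N ρL ρR I A = ∏ y ∈ Icc 1 (N - 1),
      (if y ∈ A then (if y ∈ I then ρR else ρL) else 1 - (if y ∈ I then ρR else ρL)) := by
  rw [sepB, ← prod_ite_mem_of_subset hI]
  exact prod_congr rfl fun y _ => by split_ifs <;> rfl

theorem sum_sepB_mul_prod_occ {N : ℕ} {I T : Finset ℕ} (hI : I ⊆ Icc 1 (N - 1))
    (hT : T ⊆ Icc 1 (N - 1)) (ρL ρR : ℝ) :
    ∑ A ∈ (Icc 1 (N - 1)).powerset, sepB N ρL ρR I A * ∏ y ∈ T, occ A y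
      = ∏ y ∈ T, if y ∈ I then ρR else ρL := by
  simp_rw [prod_occ, mul_ite, mul_one, mul_zero, ← sum_filter, sepB_eq_prod hI]
  exact sum_powerset_superset_prod_bernoulli hT _

theorem sum_superset_sepF {N : ℕ} {K : Finset ℕ} (hK : K ⊆ Icc 1 (N - 1)) (ωL ωR : ℝ) :
    ∑ I ∈ (Icc 1 (N - 1)).powerset with K ⊆ I, sepF N ωL ωR I = sepQ N ωL ωR K :=
  sum_superset_sum_superset_neg_one_pow_mul hK _

theorem sepQ_image_of_strictMono {N n : ℕ} (ωL ωR : ℝ) {x : Fin n → ℕ} (hx : StrictMono x)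
    (s : Finset (Fin n)) : sepQ N ωL ωR (s.image x) = idxProdW N n ωL ωR x s := by
  have hsort : (s.image x).sort (· ≤ ·) = (s.sort (· ≤ ·)).map x := by
    have := (hx.strictMonoOn s).map_finsetSort (f := ⟨x, hx.injective⟩)
    rwa [map_eq_image, eq_comm] at this
  rw [sepQ, idxProdW, hsort, List.zipIdx_map]
  simp only [List.map_map]
  rfl

theorem sep_n_point_noncentered_general_general
    (N n : ℕ) (ρL ρR ωL ωR : ℝ)
    (x : Fin n → ℕ) (hmono : StrictMono x)
    (hx1 : ∀ i, 1 ≤ x i) (hx2 : ∀ i, x i ≤ N - 1) :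
    ∑ A ∈ (Finset.Icc 1 (N - 1)).powerset,
        sepMu N ωL ωR ρL ρR A * ∏ i, occ A (x i)
      = ∑ j ∈ Finset.range (n + 1), ρL ^ (n - j) * (ρR - ρL) ^ j *
          ∑ s ∈ Finset.powersetCard j (Finset.univ : Finset (Fin n)),
            idxProdW N n ωL ωR x s := by
  have hinj : Set.InjOn x (univ : Finset (Fin n)) := hmono.injective.injOn
  have hxS (t : Finset (Fin n)) : t.image x ⊆ Icc 1 (N - 1) := by
    simp only [image_subset_iff, mem_Icc]
    exact fun i _ => ⟨hx1 i, hx2 i⟩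
  calc _ = ∑ I ∈ (Icc 1 (N - 1)).powerset, sepF N ωL ωR I *
        ∑ A ∈ (Icc 1 (N - 1)).powerset, sepB N ρL ρR I A * ∏ y ∈ univ.image x, occ A y := by
        simp_rw [sepMu, sum_mul, mul_sum, mul_assoc, prod_image hinj]
        exact sum_comm
    _ = ∑ I ∈ (Icc 1 (N - 1)).powerset, sepF N ωL ωR I *
        ∑ t ∈ univ.powerset with t.image x ⊆ I, (ρR - ρL) ^ #t * ρL ^ (n - #t) := by
        refine sum_congr rfl fun I hI => ?_
        rw [sum_sepB_mul_prod_occ (mem_powerset.mp hI) (hxS univ), prod_image hinj,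
          prod_ite_mem_eq_sum_powerset, card_univ, Fintype.card_fin]
    _ = ∑ t ∈ univ.powerset, ρL ^ (n - #t) * (ρR - ρL) ^ #t *
        ∑ I ∈ (Icc 1 (N - 1)).powerset with t.image x ⊆ I, sepF N ωL ωR I := by
        simp_rw [sum_filter, mul_sum]
        rw [sum_comm]
        refine sum_congr rfl fun t _ => sum_congr rfl fun I _ => ?_
        split_ifs <;> ring
    _ = ∑ t ∈ univ.powerset, ρL ^ (n - #t) * (ρR - ρL) ^ #t * idxProdW N n ωL ωR x t := by
        simp_rw [sum_superset_sepF (hxS _), sepQ_image_of_strictMono ωL ωR hmono]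
    _ = _ := by
        rw [sum_powerset, card_univ, Fintype.card_fin]
        refine sum_congr rfl fun j _ => ?_
        rw [mul_sum]
        exact sum_congr rfl fun t ht => by rw [(mem_powersetCard.mp ht).2]

/-- for arbitrary ω_L, ω_R > 0, the n-point non-centered correlations of μ. -/
theorem sep_n_point_noncentered_general
    (N n : ℕ) (hN : 2 ≤ N) (hn : 1 ≤ n) (ρL ρR ωL ωR : ℝ)
    (hρL : 0 < ρL ∧ ρL < 1) (hρR : 0 < ρR ∧ ρR < 1)
    (hωL : 0 < ωL) (hωR : 0 < ωR)
    (x : Fin n → ℕ) (hmono : StrictMono x)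
    (hx1 : ∀ i, 1 ≤ x i) (hx2 : ∀ i, x i ≤ N - 1) :
    ∑ A ∈ (Finset.Icc 1 (N - 1)).powerset,
        sepMu N ωL ωR ρL ρR A * ∏ i, occ A (x i)
      = ∑ j ∈ Finset.range (n + 1), ρL ^ (n - j) * (ρR - ρL) ^ j *
          ∑ s ∈ Finset.powersetCard j (Finset.univ : Finset (Fin n)),
            idxProdW N n ωL ωR x s :=
  sep_n_point_noncentered_general_general N n ρL ρR ωL ωR x hmono hx1 hx2
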